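/- For every d×d unitary matrix V and every i : Fin d, letting M = P · (I_d ⊗ₖ V) · (E_{ii} ⊗ₖ (1/d) • I_d) · (I_d ⊗ₖ V)† · P†, one has tr₂(M) = E_{ii}, where E_{ii} = Matrix.stdBasisMatrix i i 1. (Correctness of the zero-error private communication scheme: when the data register carries the basis state |i⟩ and the second input is maximally mixed, Bob's output is exactly |i⟩⟨i|, regardless of V.) -/

import Mathlib

open Matrix Kronecker

/-- The controlled-phase gate P, diagonal with P[(i,j),(i,j)] = ω^{i·j}, ω = exp(2πi/d). -/
noncomputable def Pgate (d : ℕ) : Matrix (Fin d × Fin d) (Fin d × Fin d) ℂ :=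
  Matrix.diagonal fun p => Complex.exp (2 * Real.pi * Complex.I / d) ^ ((p.1 : ℕ) * (p.2 : ℕ))

/-- Partial trace over the second system: tr₂(M)[i,k] = Σ_j M[(i,j),(k,j)]. -/
noncomputable def ptrace2 (d : ℕ) (M : Matrix (Fin d × Fin d) (Fin d × Fin d) ℂ) :
    Matrix (Fin d) (Fin d) ℂ :=
  fun i k => ∑ j : Fin d, M (i, j) (k, j)

/-!
Conjugating `E_ii ⊗ B` by `1 ⊗ V` replaces `B` by `V B Vᴴ`, which is `B` again for the maximally
mixed `B = d⁻¹ • 1`. Conjugating by a diagonal gate with unimodular entries does not change the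
entries `((i,j),(i,j))`, and these are the only ones the partial trace reads, so the output is
`trace B • E_ii = E_ii`.
-/

theorem Matrix.one_kronecker_mul_kronecker_mul_conjTranspose {m n R : Type*} [Fintype m]
    [Fintype n] [DecidableEq m] [CommSemiring R] [StarRing R]
    (U : Matrix n n R) (A : Matrix m m R) (B : Matrix n n R) :
    ((1 : Matrix m m R) ⊗ₖ U) * (A ⊗ₖ B) * ((1 : Matrix m m R) ⊗ₖ U)ᴴ = A ⊗ₖ (U * B * Uᴴ) := by
  rw [conjTranspose_kronecker, conjTranspose_one, ← mul_kronecker_mul, ← mul_kronecker_mul,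
    one_mul, mul_one]

theorem Complex.exp_two_pi_mul_I_div_mem_unitary (d : ℕ) :
    Complex.exp (2 * Real.pi * Complex.I / d) ∈ unitary ℂ := by
  have h : star (Complex.exp (2 * Real.pi * Complex.I / d)) *
      Complex.exp (2 * Real.pi * Complex.I / d) = 1 := by
    rw [Complex.star_def, ← Complex.exp_conj, ← Complex.exp_add, ← Complex.exp_zero]
    congr 1
    simp [map_ofNat]
    ring
  exact ⟨h, by rwa [mul_comm]⟩

theorem ptrace2_diagonal_mul_single_kronecker_mul_conjTranspose {d : ℕ}
    {D : Fin d × Fin d → ℂ} (hD : ∀ p, D p ∈ unitary ℂ) (i : Fin d)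
    (B : Matrix (Fin d) (Fin d) ℂ) :
    ptrace2 d (diagonal D * (single i i 1 ⊗ₖ B) * (diagonal D)ᴴ) = B.trace • single i i 1 := by
  ext a b
  simp only [ptrace2, diagonal_conjTranspose, diagonal_mul, mul_diagonal, kroneckerMap_apply,
    Matrix.smul_apply, single_apply, smul_eq_mul, Pi.star_apply]
  by_cases h : i = a ∧ i = b
  · obtain ⟨rfl, rfl⟩ := h
    simp only [and_self, if_true, one_mul, mul_one, trace, diag]
    refine Finset.sum_congr rfl fun j _ => ?_
    rw [mul_right_comm, Unitary.mul_star_self_of_mem (hD _), one_mul]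
  · simp [h]

theorem ptrace2_Pgate_mul_single_kronecker_mul_conjTranspose {d : ℕ} (i : Fin d)
    (B : Matrix (Fin d) (Fin d) ℂ) :
    ptrace2 d (Pgate d * (single i i 1 ⊗ₖ B) * (Pgate d)ᴴ) = B.trace • single i i 1 :=
  ptrace2_diagonal_mul_single_kronecker_mul_conjTranspose
    (fun _ => pow_mem (Complex.exp_two_pi_mul_I_div_mem_unitary d) _) i B

theorem stmt_14_general (d : ℕ)
    (V : Matrix (Fin d) (Fin d) ℂ) (hV : V ∈ Matrix.unitaryGroup (Fin d) ℂ) (i : Fin d) :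
    ptrace2 d
      (Pgate d * ((1 : Matrix (Fin d) (Fin d) ℂ) ⊗ₖ V) *
        ((Matrix.single i i (1 : ℂ)) ⊗ₖ (((d : ℂ))⁻¹ • (1 : Matrix (Fin d) (Fin d) ℂ))) *
        ((1 : Matrix (Fin d) (Fin d) ℂ) ⊗ₖ V)ᴴ * (Pgate d)ᴴ) =
      Matrix.single i i (1 : ℂ) := by
  have hd : (d : ℂ) ≠ 0 := Nat.cast_ne_zero.mpr i.pos.ne'
  have hmixed : V * ((d : ℂ)⁻¹ • 1) * Vᴴ = (d : ℂ)⁻¹ • 1 := by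
    rw [mul_smul_comm, mul_one, smul_mul_assoc, ← star_eq_conjTranspose,
      Unitary.mul_star_self_of_mem hV]
  rw [mul_assoc (Pgate d), mul_assoc (Pgate d), one_kronecker_mul_kronecker_mul_conjTranspose,
    hmixed, ptrace2_Pgate_mul_single_kronecker_mul_conjTranspose, trace_smul, trace_one,
    Fintype.card_fin, smul_eq_mul, inv_mul_cancel₀ hd, one_smul]

/-- Correctness of the zero-error private scheme: with data state |i⟩⟨i| and maximally
mixed second input, Bob's output is exactly |i⟩⟨i|, for every unitary V. -/
theorem stmt_14 (d : ℕ) (hd : 2 ≤ d)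
    (V : Matrix (Fin d) (Fin d) ℂ) (hV : V ∈ Matrix.unitaryGroup (Fin d) ℂ) (i : Fin d) :
    ptrace2 d
      (Pgate d * ((1 : Matrix (Fin d) (Fin d) ℂ) ⊗ₖ V) *
        ((Matrix.single i i (1 : ℂ)) ⊗ₖ (((d : ℂ))⁻¹ • (1 : Matrix (Fin d) (Fin d) ℂ))) *
        ((1 : Matrix (Fin d) (Fin d) ℂ) ⊗ₖ V)ᴴ * (Pgate d)ᴴ) =
      Matrix.single i i (1 : ℂ) :=
  stmt_14_general d V hV i
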